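/- (Integration-by-parts identity (4.11).) Assume additionally A_θ, A_z ∈ C²(closure of E), u ∈ C²(closure of E; ℝ³), and u = 0 on ∂E. Then (F₂₂ − κ_θ u_t, F₃₃ − κ_z u_t)_E = ∫_E u_{θ,z} u_{z,θ} dθdz + ∫_E (A_{θ,z} A_{z,θ}/(A_θ A_z)) u_θ u_z dθdz − (1/2) ∫_E ∂_z(A_{θ,z}/A_z) u_z² dθdz − (1/2) ∫_E ∂_θ(A_{z,θ}/A_θ) u_θ² dθdz. -/

import Mathlib

open MeasureTheory Set Real

noncomputable section

/-- Partial derivative in `θ` of a scalar function on the parameter plane `(θ, z)`. -/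
def dTh (f : ℝ × ℝ → ℝ) (p : ℝ × ℝ) : ℝ := fderiv ℝ f p (1, 0)

/-- Partial derivative in `z` of a scalar function on the parameter plane `(θ, z)`. -/
def dZ (f : ℝ × ℝ → ℝ) (p : ℝ × ℝ) : ℝ := fderiv ℝ f p (0, 1)

/-- The two-dimensional data: the functions `z1, z2` determining the parameter domain `E`,
the metric coefficients `Ath = A_θ`, `Az = A_z`, the principal curvatures `kth = κ_θ`,
`kz = κ_z`, and the components `ut = u_t`, `uth = u_θ`, `uz = u_z` of a displacement. -/
structure Setup2D where
  z1 : ℝ → ℝ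
  z2 : ℝ → ℝ
  Ath : ℝ × ℝ → ℝ
  Az : ℝ × ℝ → ℝ
  kth : ℝ × ℝ → ℝ
  kz : ℝ × ℝ → ℝ
  ut : ℝ × ℝ → ℝ
  uth : ℝ × ℝ → ℝ
  uz : ℝ × ℝ → ℝ

namespace Setup2D

/-- The parameter domain `E = {(θ,z) : θ ∈ (0,1), z ∈ (z1 θ, z2 θ)}`. -/
def E (S : Setup2D) : Set (ℝ × ℝ) :=
  {p | p.1 ∈ Ioo (0 : ℝ) 1 ∧ p.2 ∈ Ioo (S.z1 p.1) (S.z2 p.1)}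

/-- The entry `F₂₂` of the simplified gradient. -/
def F22 (S : Setup2D) (p : ℝ × ℝ) : ℝ :=
  (S.Az p * dTh S.uth p + S.Az p * S.Ath p * S.kth p * S.ut p + dZ S.Ath p * S.uz p) /
    (S.Az p * S.Ath p)

/-- The entry `F₂₃` of the simplified gradient. -/
def F23 (S : Setup2D) (p : ℝ × ℝ) : ℝ :=
  (S.Ath p * dZ S.uth p - dTh S.Az p * S.uz p) / (S.Az p * S.Ath p)

/-- The entry `F₃₂` of the simplified gradient. -/
def F32 (S : Setup2D) (p : ℝ × ℝ) : ℝ :=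
  (S.Az p * dTh S.uz p - dZ S.Ath p * S.uth p) / (S.Az p * S.Ath p)

/-- The entry `F₃₃` of the simplified gradient. -/
def F33 (S : Setup2D) (p : ℝ × ℝ) : ℝ :=
  (S.Ath p * dZ S.uz p + S.Az p * S.Ath p * S.kz p * S.ut p + dTh S.Az p * S.uth p) /
    (S.Az p * S.Ath p)

/-- `F₂₃^sym = (F₂₃ + F₃₂)/2`. -/
def F23sym (S : Setup2D) (p : ℝ × ℝ) : ℝ := (S.F23 p + S.F32 p) / 2

/-- `|F^sym|² = F₂₂² + 2 (F₂₃^sym)² + F₃₃²`. -/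
def FsymSq (S : Setup2D) (p : ℝ × ℝ) : ℝ := S.F22 p ^ 2 + 2 * S.F23sym p ^ 2 + S.F33 p ^ 2

/-- The weighted inner product `(f, g)_E = ∫_E A_θ A_z f g dθ dz`. -/
def ip (S : Setup2D) (f g : ℝ × ℝ → ℝ) : ℝ := ∫ p in S.E, S.Ath p * S.Az p * f p * g p

/-- The weighted squared norm `‖f‖²_E`. -/
def nsq (S : Setup2D) (f : ℝ × ℝ → ℝ) : ℝ := S.ip f f

/-- The weighted squared norm `‖|F^sym|‖²_E` of the simplified symmetrized gradient. -/
def nF (S : Setup2D) : ℝ := ∫ p in S.E, S.Ath p * S.Az p * S.FsymSq p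

/-- The standing context: the form of the domain, the regularity `A_θ, A_z, κ_θ, κ_z ∈ C¹`,
positivity of `A_θ, A_z` on the closure of `E`, and `u ∈ C¹`. -/
def Base (S : Setup2D) : Prop :=
  (∀ θ ∈ Icc (0 : ℝ) 1, 0 ≤ S.z1 θ ∧ S.z1 θ < S.z2 θ ∧ S.z2 θ ≤ 1) ∧
  ContDiff ℝ 1 S.Ath ∧ ContDiff ℝ 1 S.Az ∧ ContDiff ℝ 1 S.kth ∧ ContDiff ℝ 1 S.kz ∧
  (∀ p ∈ closure S.E, 0 < S.Ath p ∧ 0 < S.Az p) ∧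
  ContDiff ℝ 1 S.ut ∧ ContDiff ℝ 1 S.uth ∧ ContDiff ℝ 1 S.uz

/-- The boundary condition `u = 0` on `∂E`. -/
def BZero (S : Setup2D) : Prop := ∀ p ∈ frontier S.E, S.ut p = 0 ∧ S.uth p = 0 ∧ S.uz p = 0

/-- The additional `C²` regularity of `A_θ, A_z` and `u`. -/
def Csq (S : Setup2D) : Prop :=
  ContDiff ℝ 2 S.Ath ∧ ContDiff ℝ 2 S.Az ∧
  ContDiff ℝ 2 S.ut ∧ ContDiff ℝ 2 S.uth ∧ ContDiff ℝ 2 S.uz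

/-- The Codazzi–Gauss identity `∂_z(A_{θ,z}/A_z) + ∂_θ(A_{z,θ}/A_θ) = -A_z A_θ κ_z κ_θ`. -/
def CodazziGauss (S : Setup2D) : Prop :=
  ∀ p ∈ S.E,
    dZ (fun q => dZ S.Ath q / S.Az q) p + dTh (fun q => dTh S.Az q / S.Ath q) p =
      -(S.Az p * S.Ath p * S.kz p * S.kth p)

/-- The uniform bounds `a ≤ A_θ, A_z ≤ A` and `|∇A_θ| + |∇A_z| ≤ B` on the closure of `E`. -/
def Bounds (S : Setup2D) (a A B : ℝ) : Prop :=
  ∀ p ∈ closure S.E, a ≤ S.Ath p ∧ S.Ath p ≤ A ∧ a ≤ S.Az p ∧ S.Az p ≤ A ∧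
    ‖fderiv ℝ S.Ath p‖ + ‖fderiv ℝ S.Az p‖ ≤ B

/-- `ρ` satisfies `κ_z = ρ κ_θ` with `ρ₀ ≤ ρ ≤ ρ₁` and `|∇ρ| ≤ c2`. -/
def RhoHyp (S : Setup2D) (ρ : ℝ × ℝ → ℝ) (ρ0 ρ1 c2 : ℝ) : Prop :=
  ContDiff ℝ 1 ρ ∧ (∀ p ∈ S.E, S.kz p = ρ p * S.kth p) ∧
  (∀ p ∈ closure S.E, ρ0 ≤ ρ p ∧ ρ p ≤ ρ1 ∧ ‖fderiv ℝ ρ p‖ ≤ c2)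

/-- Nonnegativity of the curvatures and the comparability condition
`(1/c)√(κ_θ κ_z) ≤ κ_θ, κ_z ≤ c √(κ_θ κ_z)` on `E`. -/
def Comparable (S : Setup2D) (c : ℝ) : Prop :=
  ∀ p ∈ S.E, 0 ≤ S.kth p ∧ 0 ≤ S.kz p ∧
    c⁻¹ * Real.sqrt (S.kth p * S.kz p) ≤ S.kth p ∧
    S.kth p ≤ c * Real.sqrt (S.kth p * S.kz p) ∧
    c⁻¹ * Real.sqrt (S.kth p * S.kz p) ≤ S.kz p ∧
    S.kz p ≤ c * Real.sqrt (S.kth p * S.kz p)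

end Setup2D



section AuxIBP

open Filter Topology
open scoped Manifold

lemma countable_isolated (B : Set ℝ) :
    {x | x ∈ B ∧ x ∉ closure (B \ {x})}.Countable := by
  set S := {x | x ∈ B ∧ x ∉ closure (B \ {x})} with hS
  have key : ∀ x ∈ S, ∃ pq : ℚ × ℚ, (pq.1 : ℝ) < x ∧ x < (pq.2 : ℝ) ∧
      Ioo (pq.1 : ℝ) (pq.2 : ℝ) ∩ B ⊆ {x} := by
    intro x hx
    obtain ⟨hxB, hxcl⟩ := hx
    rw [Metric.mem_closure_iff] at hxcl
    push_neg at hxcl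
    obtain ⟨ε, εpos, hε⟩ := hxcl
    obtain ⟨p, hp1, hp2⟩ := exists_rat_btwn (show x - ε < x by linarith)
    obtain ⟨q, hq1, hq2⟩ := exists_rat_btwn (show x < x + ε by linarith)
    refine ⟨(p, q), hp2, hq1, ?_⟩
    rintro y ⟨⟨hy1, hy2⟩, hyB⟩
    by_contra hne
    have hmem : y ∈ B \ {x} := ⟨hyB, hne⟩
    have hd : dist x y < ε := by
      rw [Real.dist_eq, abs_lt]
      constructor <;> nlinarith
    linarith [hε y hmem]
  classical
  choose! f hf1 hf2 hf3 using key
  have hinj : Set.InjOn f S := by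
    intro x hx y hy hxy
    have hxmem : x ∈ Ioo ((f y).1 : ℝ) ((f y).2 : ℝ) ∩ B := by
      rw [← hxy]
      exact ⟨⟨hf1 x hx, hf2 x hx⟩, hx.1⟩
    simpa using hf3 y hy hxmem
  exact MapsTo.countable_of_injOn (Set.mapsTo_univ f S) hinj Set.countable_univ

lemma deriv_zero_of_cluster {g : ℝ → ℝ} {x d : ℝ} {B : Set ℝ}
    (hB : ∀ y ∈ B, g y = 0) (hx : x ∈ B) (hcl : x ∈ closure (B \ {x}))
    (hd : HasDerivAt g d x) : d = 0 := by
  have hne : (𝓝[B \ {x}] x).NeBot := mem_closure_iff_nhdsWithin_neBot.mp hcl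
  have hle : 𝓝[B \ {x}] x ≤ 𝓝[≠] x := nhdsWithin_mono x (fun y hy => hy.2)
  have h1 : Filter.Tendsto (slope g x) (𝓝[B \ {x}] x) (𝓝 d) :=
    ((hasDerivAt_iff_tendsto_slope).mp hd).mono_left hle
  have h2 : Filter.Tendsto (slope g x) (𝓝[B \ {x}] x) (𝓝 0) := by
    have hz : ∀ y ∈ B \ {x}, slope g x y = 0 := by
      intro y hy
      rw [slope_def_field, hB y hy.1, hB x hx]
      simp
    refine Filter.Tendsto.congr' ?_ tendsto_const_nhds
    filter_upwards [self_mem_nhdsWithin] with y hy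
    exact (hz y hy).symm
  exact tendsto_nhds_unique h1 h2

lemma hasDerivAt_sec_z {f : ℝ × ℝ → ℝ} (hf : Differentiable ℝ f) (θ z : ℝ) :
    HasDerivAt (fun t => f (θ, t)) (dZ f (θ, z)) z :=
  (hf (θ, z)).hasFDerivAt.comp_hasDerivAt z ((hasDerivAt_const z θ).prodMk (hasDerivAt_id z))

lemma hasDerivAt_sec_th {f : ℝ × ℝ → ℝ} (hf : Differentiable ℝ f) (θ z : ℝ) :
    HasDerivAt (fun t => f (t, z)) (dTh f (θ, z)) θ :=
  (hf (θ, z)).hasFDerivAt.comp_hasDerivAt θ ((hasDerivAt_id θ).prodMk (hasDerivAt_const θ z))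

lemma continuous_dZ {f : ℝ × ℝ → ℝ} (hf : ContDiff ℝ 1 f) : Continuous (dZ f) :=
  ((ContinuousLinearMap.apply ℝ ℝ ((0 : ℝ), (1 : ℝ))).continuous).comp (hf.continuous_fderiv one_ne_zero)

lemma continuous_dTh {f : ℝ × ℝ → ℝ} (hf : ContDiff ℝ 1 f) : Continuous (dTh f) :=
  ((ContinuousLinearMap.apply ℝ ℝ ((1 : ℝ), (0 : ℝ))).continuous).comp (hf.continuous_fderiv one_ne_zero)

lemma slice_null {v : ℝ × ℝ → ℝ} (hv : ContDiff ℝ 1 v) {A : Set (ℝ × ℝ)}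
    (hA : MeasurableSet A) (h0 : ∀ p ∈ A, v p = 0) :
    volume {p | p ∈ A ∧ dZ v p ≠ 0} = 0 := by
  have hdZ : Continuous (dZ v) := continuous_dZ hv
  have hmeas : MeasurableSet {p | p ∈ A ∧ dZ v p ≠ 0} := by
    have : {p | p ∈ A ∧ dZ v p ≠ 0} = A ∩ (dZ v) ⁻¹' ({0}ᶜ) := rfl
    rw [this]
    exact hA.inter ((isOpen_compl_singleton.preimage hdZ).measurableSet)
  rw [show (volume : Measure (ℝ × ℝ)) = (volume : Measure ℝ).prod volume from
    MeasureTheory.Measure.volume_eq_prod ℝ ℝ]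
  rw [MeasureTheory.Measure.measure_prod_null hmeas]
  refine Filter.Eventually.of_forall (fun θ => ?_)
  show volume (Prod.mk θ ⁻¹' {p | p ∈ A ∧ dZ v p ≠ 0}) = 0
  refine measure_mono_null ?_ ((countable_isolated (Prod.mk θ ⁻¹' A)).measure_zero volume)
  intro z hz
  refine ⟨hz.1, fun hcl => hz.2 ?_⟩
  exact deriv_zero_of_cluster (g := fun t => v (θ, t)) (fun y hy => h0 _ hy) hz.1 hcl
    (hasDerivAt_sec_z (hv.differentiable one_ne_zero) θ z)

lemma ftc_open {q : ℝ → ℝ} (hq : ContDiff ℝ 1 q) {s : Set ℝ} (hs : IsOpen s)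
    (hb : Bornology.IsBounded s) (h0 : ∀ x ∈ frontier s, q x = 0) :
    ∫ x in s, deriv q x = 0 := by
  classical
  set 𝒞 : Set (Set ℝ) := (connectedComponentIn s) '' s with h𝒞
  have hCsub : ∀ C ∈ 𝒞, C ⊆ s := by
    rintro C ⟨x, hx, rfl⟩
    exact connectedComponentIn_subset s x
  have hCopen : ∀ C ∈ 𝒞, IsOpen C := by
    rintro C ⟨x, hx, rfl⟩
    exact hs.connectedComponentIn
  have hcount : 𝒞.Countable := by
    have hsub : 𝒞 ⊆ (connectedComponentIn s) '' (s ∩ Set.range ((↑) : ℚ → ℝ)) := by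
      rintro C ⟨x, hx, rfl⟩
      have hne : (connectedComponentIn s x).Nonempty := ⟨x, mem_connectedComponentIn hx⟩
      obtain ⟨r, hr⟩ := (Rat.denseRange_cast (𝕜 := ℝ)).exists_mem_open hs.connectedComponentIn hne
      exact ⟨r, ⟨connectedComponentIn_subset s x hr, ⟨r, rfl⟩⟩,
        (connectedComponentIn_eq hr).symm⟩
    exact ((Set.countable_range _).mono Set.inter_subset_right).image _ |>.mono hsub
  -- each component integrates to zero
  have hkey : ∀ C ∈ 𝒞, ∫ x in C, deriv q x = 0 := by
    rintro C ⟨x, hx, rfl⟩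
    set C := connectedComponentIn s x with hC
    have hCs : C ⊆ s := connectedComponentIn_subset s x
    have hCo : IsOpen C := hs.connectedComponentIn
    have hxC : x ∈ C := mem_connectedComponentIn hx
    have hCb : Bornology.IsBounded C := hb.subset hCs
    obtain ⟨hbb, hba⟩ := (isBounded_iff_bddBelow_bddAbove).mp hCb
    set a := sInf C with ha
    set b := sSup C with hbdef
    have hane : C.Nonempty := ⟨x, hxC⟩
    have hanotC : a ∉ C := by
      intro haC
      obtain ⟨ε, εpos, hball⟩ := Metric.isOpen_iff.mp hCo a haC
      have : a - ε / 2 ∈ C := hball (by rw [Metric.mem_ball, Real.dist_eq, abs_of_neg] <;> linarith)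
      have := csInf_le hbb this
      linarith
    have hbnotC : b ∉ C := by
      intro hbC
      obtain ⟨ε, εpos, hball⟩ := Metric.isOpen_iff.mp hCo b hbC
      have : b + ε / 2 ∈ C := hball (by rw [Metric.mem_ball, Real.dist_eq, abs_of_pos] <;> linarith)
      have := le_csSup hba this
      linarith
    have hclC : closure C ⊆ closure s := closure_mono hCs
    have hmemfr : ∀ y ∈ closure C, y ∉ C → y ∈ frontier s := by
      intro y hycl hynotC
      have hys : y ∉ s := by
        intro hys
        set C' := connectedComponentIn s y with hC'
        have hyC' : y ∈ C' := mem_connectedComponentIn hys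
        have hC'o : IsOpen C' := hs.connectedComponentIn
        obtain ⟨z, hzC', hzC⟩ : (C' ∩ C).Nonempty := by
          rw [_root_.mem_closure_iff] at hycl
          obtain ⟨z, hz1, hz2⟩ := hycl C' hC'o hyC'
          exact ⟨z, hz1, hz2⟩
        have h1 : C = connectedComponentIn s z := connectedComponentIn_eq hzC
        have h2 : C' = connectedComponentIn s z := connectedComponentIn_eq hzC'
        exact hynotC (by rw [h1, ← h2]; exact hyC')
      exact ⟨hclC hycl, fun hint => hys (interior_subset (hs.interior_eq ▸ hint))⟩
    have hafr : a ∈ frontier s := hmemfr a (csInf_mem_closure hane hbb) hanotC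
    have hbfr : b ∈ frontier s := hmemfr b (csSup_mem_closure hane hba) hbnotC
    have hCeq : C = Ioo a b := by
      apply Set.eq_of_subset_of_subset
      · intro y hy
        have h1 : a ≤ y := csInf_le hbb hy
        have h2 : y ≤ b := le_csSup hba hy
        refine ⟨h1.lt_of_ne ?_, h2.lt_of_ne ?_⟩
        · intro h; exact hanotC (h ▸ hy)
        · intro h; exact hbnotC (h ▸ hy)
      · intro y hy
        obtain ⟨c1, hc1C, hc1⟩ : ∃ c ∈ C, c < y := by
          by_contra h
          push_neg at h
          exact absurd (le_csInf hane h) (not_le.mpr hy.1)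
        obtain ⟨c2, hc2C, hc2⟩ : ∃ c ∈ C, y < c := by
          by_contra h
          push_neg at h
          exact absurd (csSup_le hane h) (not_le.mpr hy.2)
        exact (isPreconnected_connectedComponentIn.ordConnected).out hc1C hc2C
          ⟨hc1.le, hc2.le⟩
    have hab : a < b := by
      have := hCeq ▸ hxC
      exact lt_trans this.1 this.2
    rw [hCeq]
    have h1 : ∫ x in Ioo a b, deriv q x = ∫ x in Ioc a b, deriv q x :=
      (MeasureTheory.integral_Ioc_eq_integral_Ioo).symm
    rw [h1, ← intervalIntegral.integral_of_le hab.le,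
      intervalIntegral.integral_deriv_eq_sub
        (fun y _ => (hq.differentiable one_ne_zero) y)
        ((hq.continuous_deriv le_rfl).intervalIntegrable a b),
      h0 a hafr, h0 b hbfr, sub_zero]
  -- sum over components
  have hsU : s = ⋃ (C : 𝒞), (C : Set ℝ) := by
    rw [← Set.sUnion_eq_iUnion]
    apply Set.eq_of_subset_of_subset
    · intro x hx
      exact ⟨connectedComponentIn s x, ⟨x, hx, rfl⟩, mem_connectedComponentIn hx⟩
    · rintro x ⟨C, hC𝒞, hxC⟩
      exact hCsub C hC𝒞 hxC
  haveI : Countable 𝒞 := hcount.to_subtype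
  have hdisj : Pairwise (Function.onFun Disjoint (fun C : 𝒞 => (C : Set ℝ))) := by
    rintro ⟨C, hC⟩ ⟨D, hD⟩ hne
    simp only [Function.onFun]
    rw [Set.disjoint_left]
    intro z hzC hzD
    obtain ⟨xc, _, rfl⟩ := hC
    obtain ⟨xd, _, rfl⟩ := hD
    exact hne (Subtype.ext ((connectedComponentIn_eq hzC).trans (connectedComponentIn_eq hzD).symm))
  have hint : IntegrableOn (deriv q) s := by
    have hcs : IsCompact (closure s) := hb.isCompact_closure
    exact (((hq.continuous_deriv le_rfl).continuousOn).integrableOn_compact hcs).mono_set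
      subset_closure
  rw [hsU, MeasureTheory.integral_iUnion (fun C : 𝒞 => (hCopen C C.2).measurableSet) hdisj
    (hsU ▸ hint)]
  rw [tsum_congr (fun C : 𝒞 => hkey (C : Set ℝ) C.2)]
  exact tsum_zero

lemma int_dZ_zero {f : ℝ × ℝ → ℝ} (hf : ContDiff ℝ 1 f) {U : Set (ℝ × ℝ)} (hU : IsOpen U)
    (hb : Bornology.IsBounded U) (h0 : ∀ p ∈ frontier U, f p = 0) :
    ∫ p in U, dZ f p = 0 := by
  have hg : Continuous (dZ f) := continuous_dZ hf
  obtain ⟨R, hR⟩ := hb.subset_closedBall 0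
  have hInt : Integrable (U.indicator (dZ f)) := by
    rw [integrable_indicator_iff hU.measurableSet]
    exact (hg.continuousOn.integrableOn_compact hb.isCompact_closure).mono_set subset_closure
  rw [← integral_indicator hU.measurableSet]
  rw [show (volume : Measure (ℝ × ℝ)) = (volume : Measure ℝ).prod volume from
    Measure.volume_eq_prod ℝ ℝ] at hInt ⊢
  rw [MeasureTheory.integral_prod _ hInt]
  have inner : ∀ θ : ℝ, ∫ z, U.indicator (dZ f) (θ, z) = 0 := by
    intro θ
    set s : Set ℝ := (Prod.mk θ) ⁻¹' U with hsdef
    have hsopen : IsOpen s := hU.preimage (Continuous.prodMk_right θ)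
    have hsb : Bornology.IsBounded s := by
      refine (Metric.isBounded_closedBall (x := (0 : ℝ)) (r := R)).subset ?_
      intro z hz
      have h1 : (θ, z) ∈ Metric.closedBall (0 : ℝ × ℝ) R := hR hz
      rw [Metric.mem_closedBall, dist_zero_right] at h1 ⊢
      exact le_trans (norm_snd_le (θ, z)) h1
    set q : ℝ → ℝ := fun z => f (θ, z) with hqdef
    have hq : ContDiff ℝ 1 q := hf.comp (contDiff_const.prodMk contDiff_id)
    have hfr : ∀ z ∈ frontier s, q z = 0 := by
      intro z hz
      refine h0 (θ, z) ?_
      rw [frontier, hsopen.interior_eq] at hz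
      refine ⟨(Continuous.prodMk_right θ).closure_preimage_subset U hz.1, fun hmem => hz.2 ?_⟩
      have h2 : (θ, z) ∈ U := interior_subset hmem
      exact h2
    have heq : ∀ z, U.indicator (dZ f) (θ, z) = s.indicator (fun t => dZ f (θ, t)) z := by
      intro z
      by_cases h : (θ, z) ∈ U
      · simp [Set.indicator, hsdef, Set.mem_preimage, h]
      · simp [Set.indicator, hsdef, Set.mem_preimage, h]
    simp only [heq]
    rw [integral_indicator hsopen.measurableSet]
    have : ∀ z, dZ f (θ, z) = deriv q z :=
      fun z => ((hasDerivAt_sec_z (hf.differentiable one_ne_zero) θ z).deriv).symm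
    simp only [this]
    exact ftc_open hq hsopen hsb hfr
  simp only [inner, integral_zero]

lemma int_dTh_zero {f : ℝ × ℝ → ℝ} (hf : ContDiff ℝ 1 f) {U : Set (ℝ × ℝ)} (hU : IsOpen U)
    (hb : Bornology.IsBounded U) (h0 : ∀ p ∈ frontier U, f p = 0) :
    ∫ p in U, dTh f p = 0 := by
  have hg : Continuous (dTh f) := continuous_dTh hf
  obtain ⟨R, hR⟩ := hb.subset_closedBall 0
  have hInt : Integrable (U.indicator (dTh f)) := by
    rw [integrable_indicator_iff hU.measurableSet]
    exact (hg.continuousOn.integrableOn_compact hb.isCompact_closure).mono_set subset_closure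
  rw [← integral_indicator hU.measurableSet]
  rw [show (volume : Measure (ℝ × ℝ)) = (volume : Measure ℝ).prod volume from
    Measure.volume_eq_prod ℝ ℝ] at hInt ⊢
  rw [MeasureTheory.integral_prod_symm _ hInt]
  have inner : ∀ z : ℝ, ∫ θ, U.indicator (dTh f) (θ, z) = 0 := by
    intro z
    set s : Set ℝ := (fun t => (t, z)) ⁻¹' U with hsdef
    have hcont : Continuous (fun t : ℝ => (t, z)) := continuous_id.prodMk continuous_const
    have hsopen : IsOpen s := hU.preimage hcont
    have hsb : Bornology.IsBounded s := by
      refine (Metric.isBounded_closedBall (x := (0 : ℝ)) (r := R)).subset ?_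
      intro t ht
      have h1 : (t, z) ∈ Metric.closedBall (0 : ℝ × ℝ) R := hR ht
      rw [Metric.mem_closedBall, dist_zero_right] at h1 ⊢
      exact le_trans (norm_fst_le (t, z)) h1
    set q : ℝ → ℝ := fun t => f (t, z) with hqdef
    have hq : ContDiff ℝ 1 q := hf.comp (contDiff_id.prodMk contDiff_const)
    have hfr : ∀ t ∈ frontier s, q t = 0 := by
      intro t ht
      refine h0 (t, z) ?_
      rw [frontier, hsopen.interior_eq] at ht
      refine ⟨hcont.closure_preimage_subset U ht.1, fun hmem => ht.2 ?_⟩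
      have h2 : (t, z) ∈ U := interior_subset hmem
      exact h2
    have heq : ∀ t, U.indicator (dTh f) (t, z) = s.indicator (fun t => dTh f (t, z)) t := by
      intro t
      by_cases h : (t, z) ∈ U
      · simp [Set.indicator, hsdef, Set.mem_preimage, h]
      · simp [Set.indicator, hsdef, Set.mem_preimage, h]
    simp only [heq]
    rw [integral_indicator hsopen.measurableSet]
    have : ∀ t, dTh f (t, z) = deriv q t :=
      fun t => ((hasDerivAt_sec_th (hf.differentiable one_ne_zero) t z).deriv).symm
    simp only [this]
    exact ftc_open hq hsopen hsb hfr
  simp only [inner, integral_zero]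

lemma contDiff_dZ' {f : ℝ × ℝ → ℝ} (hf : ContDiff ℝ 2 f) : ContDiff ℝ 1 (dZ f) :=
  (hf.fderiv_right (by norm_num)).clm_apply contDiff_const

lemma contDiff_dTh' {f : ℝ × ℝ → ℝ} (hf : ContDiff ℝ 2 f) : ContDiff ℝ 1 (dTh f) :=
  (hf.fderiv_right (by norm_num)).clm_apply contDiff_const

lemma dTh_mul {f g : ℝ × ℝ → ℝ} {p : ℝ × ℝ} (hf : DifferentiableAt ℝ f p)
    (hg : DifferentiableAt ℝ g p) :
    dTh (fun q => f q * g q) p = dTh f p * g p + f p * dTh g p := by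
  rw [dTh, fderiv_fun_mul hf hg]
  simp only [ContinuousLinearMap.add_apply, ContinuousLinearMap.smul_apply, smul_eq_mul, dTh]
  ring

lemma dZ_mul {f g : ℝ × ℝ → ℝ} {p : ℝ × ℝ} (hf : DifferentiableAt ℝ f p)
    (hg : DifferentiableAt ℝ g p) :
    dZ (fun q => f q * g q) p = dZ f p * g p + f p * dZ g p := by
  rw [dZ, fderiv_fun_mul hf hg]
  simp only [ContinuousLinearMap.add_apply, ContinuousLinearMap.smul_apply, smul_eq_mul, dZ]
  ring

lemma dTh_congr {f g : ℝ × ℝ → ℝ} {p : ℝ × ℝ} (h : f =ᶠ[nhds p] g) : dTh f p = dTh g p := by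
  rw [dTh, dTh, h.fderiv_eq]

lemma dZ_congr {f g : ℝ × ℝ → ℝ} {p : ℝ × ℝ} (h : f =ᶠ[nhds p] g) : dZ f p = dZ g p := by
  rw [dZ, dZ, h.fderiv_eq]

lemma cross_symm {f : ℝ × ℝ → ℝ} (hf : ContDiff ℝ 2 f) (p : ℝ × ℝ) :
    dTh (dZ f) p = dZ (dTh f) p := by
  have hC1 : ContDiff ℝ 1 (fderiv ℝ f) := hf.fderiv_right (by norm_num)
  have hd2 : HasFDerivAt (fderiv ℝ f) (fderiv ℝ (fderiv ℝ f) p) p :=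
    ((hC1.differentiable one_ne_zero) p).hasFDerivAt
  have e1 : HasFDerivAt (dZ f)
      ((ContinuousLinearMap.apply ℝ ℝ ((0 : ℝ), (1 : ℝ))).comp (fderiv ℝ (fderiv ℝ f) p)) p :=
    ((ContinuousLinearMap.apply ℝ ℝ ((0 : ℝ), (1 : ℝ))).hasFDerivAt).comp p hd2
  have e2 : HasFDerivAt (dTh f)
      ((ContinuousLinearMap.apply ℝ ℝ ((1 : ℝ), (0 : ℝ))).comp (fderiv ℝ (fderiv ℝ f) p)) p :=
    ((ContinuousLinearMap.apply ℝ ℝ ((1 : ℝ), (0 : ℝ))).hasFDerivAt).comp p hd2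
  have h1 : dTh (dZ f) p = fderiv ℝ (fderiv ℝ f) p (1, 0) (0, 1) := by
    rw [dTh, e1.fderiv]; rfl
  have h2 : dZ (dTh f) p = fderiv ℝ (fderiv ℝ f) p (0, 1) (1, 0) := by
    rw [dZ, e2.fderiv]; rfl
  rw [h1, h2, (hf.contDiffAt.isSymmSndFDerivAt (by simp)).eq]

end AuxIBP

open Filter Topology in
open scoped Manifold in
theorem ibp_identity_diag (S : Setup2D) (hBase : S.Base) (hC2 : S.Csq) (hB0 : S.BZero) :
    S.ip (fun p => S.F22 p - S.kth p * S.ut p) (fun p => S.F33 p - S.kz p * S.ut p) =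
      (∫ p in S.E, dZ S.uth p * dTh S.uz p) +
      (∫ p in S.E, dZ S.Ath p * dTh S.Az p / (S.Ath p * S.Az p) * (S.uth p * S.uz p)) -
      (1 / 2) * (∫ p in S.E, dZ (fun q => dZ S.Ath q / S.Az q) p * S.uz p ^ 2) -
      (1 / 2) * (∫ p in S.E, dTh (fun q => dTh S.Az q / S.Ath q) p * S.uth p ^ 2) := by
  classical
  obtain ⟨hz12, hAthC1, hAzC1, hkthC1, hkzC1, hpos, hutC1, huthC1, huzC1⟩ := hBase
  obtain ⟨hAth2, hAz2, hut2, huth2, huz2⟩ := hC2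
  have huth1 : ContDiff ℝ 1 S.uth := huth2.of_le one_le_two
  have huz1 : ContDiff ℝ 1 S.uz := huz2.of_le one_le_two
  have huthD : Differentiable ℝ S.uth := huth1.differentiable one_ne_zero
  have huzD : Differentiable ℝ S.uz := huz1.differentiable one_ne_zero
  -- geometry
  have hEsub : S.E ⊆ Icc (0:ℝ) 1 ×ˢ Icc (0:ℝ) 1 := by
    rintro ⟨θ, z⟩ ⟨hθ, hz⟩
    have h1 := hz12 θ ⟨hθ.1.le, hθ.2.le⟩
    exact ⟨⟨hθ.1.le, hθ.2.le⟩, ⟨le_trans h1.1 hz.1.le, le_trans hz.2.le h1.2.2⟩⟩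
  have hclE_sub : closure S.E ⊆ Icc (0:ℝ) 1 ×ˢ Icc (0:ℝ) 1 :=
    closure_minimal hEsub (isClosed_Icc.prod isClosed_Icc)
  have hclE_cpt : IsCompact (closure S.E) :=
    (isCompact_Icc.prod isCompact_Icc).of_isClosed_subset isClosed_closure hclE_sub
  have hEb : Bornology.IsBounded S.E := hclE_cpt.isBounded.subset subset_closure
  set N : Set (ℝ × ℝ) := {p | S.Ath p ≠ 0} ∩ {p | S.Az p ≠ 0} with hNdef
  have hNopen : IsOpen N :=
    (isOpen_compl_singleton.preimage hAth2.continuous).inter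
      (isOpen_compl_singleton.preimage hAz2.continuous)
  have hclEN : closure S.E ⊆ N := fun p hp => ⟨(hpos p hp).1.ne', (hpos p hp).2.ne'⟩
  set U : Set (ℝ × ℝ) := interior S.E with hUdef
  have hUopen : IsOpen U := isOpen_interior
  have hUb : Bornology.IsBounded U := hEb.subset interior_subset
  have hUclE : U ⊆ closure S.E := interior_subset.trans subset_closure
  have hfrUE : frontier U ⊆ frontier S.E := by
    intro p hp
    refine ⟨closure_mono interior_subset hp.1, ?_⟩
    have h2 := hp.2
    rwa [hUopen.interior_eq] at h2
  -- measurable hull H and boundary part A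
  have hEfin : volume S.E ≠ ⊤ :=
    (lt_of_le_of_lt (measure_mono hEsub) (isCompact_Icc.prod isCompact_Icc).measure_lt_top).ne
  set T : Set (ℝ × ℝ) := toMeasurable volume S.E with hTdef
  set H : Set (ℝ × ℝ) := T ∩ closure S.E with hHdef
  have hHmeas : MeasurableSet H :=
    (measurableSet_toMeasurable _ _).inter isClosed_closure.measurableSet
  have hEH : S.E ⊆ H := fun p hp => ⟨subset_toMeasurable _ _ hp, subset_closure hp⟩
  have hHclE : H ⊆ closure S.E := inter_subset_right
  have hHT : H ⊆ T := inter_subset_left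
  have hμH : volume H = volume S.E :=
    le_antisymm (le_trans (measure_mono hHT) (measure_toMeasurable _).le) (measure_mono hEH)
  have hμHfin : volume H ≠ ⊤ := by rw [hμH]; exact hEfin
  have hrestr : volume.restrict S.E = volume.restrict H := by
    rw [← Measure.restrict_toMeasurable hEfin]
    apply Measure.restrict_congr_set
    rw [MeasureTheory.ae_eq_set]
    constructor
    · rw [show toMeasurable volume S.E = T from rfl,
        measure_diff hHT hHmeas.nullMeasurableSet hμHfin, hμH, hTdef, measure_toMeasurable]
      simp
    · rw [show toMeasurable volume S.E = T from rfl, Set.diff_eq_empty.mpr hHT]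
      simp
  set A : Set (ℝ × ℝ) := H \ U with hAdef
  have hAmeas : MeasurableSet A := hHmeas.diff hUopen.measurableSet
  have hUH : U ⊆ H := fun p hp => hEH (interior_subset hp)
  have hAfr : A ⊆ frontier S.E := fun p hp => ⟨hHclE hp.1, hp.2⟩
  have hAclE : A ⊆ closure S.E := fun p hp => hHclE hp.1
  -- integrability helper
  have hIntOn : ∀ (g : ℝ × ℝ → ℝ), ContinuousOn g (closure S.E) →
      ∀ (s : Set (ℝ × ℝ)), s ⊆ closure S.E → IntegrableOn g s := fun g hg s hs =>
    (hg.integrableOn_compact hclE_cpt).mono_set hs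
  -- regularity of quotient coefficients
  have hdThAzC1 : ContDiff ℝ 1 (dTh S.Az) := contDiff_dTh' hAz2
  have hdZAthC1 : ContDiff ℝ 1 (dZ S.Ath) := contDiff_dZ' hAth2
  have hwC1 : ContDiffOn ℝ 1 (fun q => dTh S.Az q / S.Ath q) N :=
    hdThAzC1.contDiffOn.div (hAth2.of_le one_le_two).contDiffOn (fun p hp => hp.1)
  have hvC1 : ContDiffOn ℝ 1 (fun q => dZ S.Ath q / S.Az q) N :=
    hdZAthC1.contDiffOn.div (hAz2.of_le one_le_two).contDiffOn (fun p hp => hp.2)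
  have hAthne : ∀ p ∈ closure S.E, S.Ath p ≠ 0 := fun p hp => (hpos p hp).1.ne'
  have hAzne : ∀ p ∈ closure S.E, S.Az p ≠ 0 := fun p hp => (hpos p hp).2.ne'
  -- continuity of all integrands on closure E
  have cg1 : ContinuousOn (fun p => dTh S.uth p * dZ S.uz p) (closure S.E) :=
    ((continuous_dTh huth1).mul (continuous_dZ huz1)).continuousOn
  have cR1 : ContinuousOn (fun p => dZ S.uth p * dTh S.uz p) (closure S.E) :=
    ((continuous_dZ huth1).mul (continuous_dTh huz1)).continuousOn
  have cg2 : ContinuousOn (fun p => dTh S.Az p / S.Ath p * (S.uth p * dTh S.uth p))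
      (closure S.E) :=
    ((continuous_dTh (hAz2.of_le one_le_two)).continuousOn.div
      hAth2.continuous.continuousOn hAthne).mul
      (huth1.continuous.mul (continuous_dTh huth1)).continuousOn
  have cg3 : ContinuousOn (fun p => dZ S.Ath p / S.Az p * (S.uz p * dZ S.uz p))
      (closure S.E) :=
    ((continuous_dZ (hAth2.of_le one_le_two)).continuousOn.div
      hAz2.continuous.continuousOn hAzne).mul
      (huz1.continuous.mul (continuous_dZ huz1)).continuousOn
  have cg4 : ContinuousOn
      (fun p => dZ S.Ath p * dTh S.Az p / (S.Ath p * S.Az p) * (S.uth p * S.uz p))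
      (closure S.E) := by
    apply ContinuousOn.mul
    · exact ((continuous_dZ (hAth2.of_le one_le_two)).mul
        (continuous_dTh (hAz2.of_le one_le_two))).continuousOn.div
        (hAth2.continuous.mul hAz2.continuous).continuousOn
        (fun p hp => mul_ne_zero (hAthne p hp) (hAzne p hp))
    · exact (huth1.continuous.mul huz1.continuous).continuousOn
  have cdThw : ContinuousOn (dTh (fun q => dTh S.Az q / S.Ath q)) (closure S.E) := by
    have h1 : ContinuousOn (fderiv ℝ (fun q => dTh S.Az q / S.Ath q)) N :=
      hwC1.continuousOn_fderiv_of_isOpen hNopen le_rfl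
    exact (((ContinuousLinearMap.apply ℝ ℝ ((1:ℝ), (0:ℝ))).continuous.comp_continuousOn
      h1).mono hclEN)
  have cdZv : ContinuousOn (dZ (fun q => dZ S.Ath q / S.Az q)) (closure S.E) := by
    have h1 : ContinuousOn (fderiv ℝ (fun q => dZ S.Ath q / S.Az q)) N :=
      hvC1.continuousOn_fderiv_of_isOpen hNopen le_rfl
    exact (((ContinuousLinearMap.apply ℝ ℝ ((0:ℝ), (1:ℝ))).continuous.comp_continuousOn
      h1).mono hclEN)
  have cR4 : ContinuousOn (fun p => dTh (fun q => dTh S.Az q / S.Ath q) p * S.uth p ^ 2)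
      (closure S.E) := cdThw.mul (huth1.continuous.pow 2).continuousOn
  have cR3 : ContinuousOn (fun p => dZ (fun q => dZ S.Ath q / S.Az q) p * S.uz p ^ 2)
      (closure S.E) := cdZv.mul (huz1.continuous.pow 2).continuousOn
  -- smooth cutoff
  obtain ⟨L, hLcpt, hKL, hLN⟩ := exists_compact_between hclE_cpt hNopen hclEN
  have hdisj : Disjoint ((interior L)ᶜ) (closure S.E) := by
    rw [Set.disjoint_left]; exact fun p hp hpK => hp (hKL hpK)
  obtain ⟨χ₀, hχ0, hχ1, _⟩ := exists_contMDiffMap_zero_one_of_isClosed (n := ⊤) (𝓘(ℝ, ℝ × ℝ))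
    (isClosed_compl_iff.mpr isOpen_interior) isClosed_closure hdisj
  have hχC : ContDiff ℝ 1 (χ₀ : ℝ × ℝ → ℝ) :=
    (contMDiff_iff_contDiff.mp χ₀.contMDiff).of_le (by exact_mod_cast le_top)
  have hχone : ∀ p ∈ closure S.E, (χ₀ : ℝ × ℝ → ℝ) p = 1 := fun p hp => hχ1 hp
  have hχzero : ∀ p ∉ interior L, (χ₀ : ℝ × ℝ → ℝ) p = 0 := fun p hp => hχ0 hp
  have hchiMul : ∀ (g : ℝ × ℝ → ℝ), ContDiffOn ℝ 1 g N →
      ContDiff ℝ 1 (fun p => (χ₀ : ℝ × ℝ → ℝ) p * g p) := by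
    intro g hg
    rw [contDiff_iff_contDiffAt]
    intro p
    by_cases hpN : p ∈ N
    · exact (hχC.contDiffAt).mul (hg.contDiffAt (hNopen.mem_nhds hpN))
    · have hpL : p ∈ Lᶜ := fun hpL => hpN (hLN hpL)
      have hopen : IsOpen (Lᶜ) := hLcpt.isClosed.isOpen_compl
      refine (contDiffAt_const (c := (0:ℝ))).congr_of_eventuallyEq ?_
      filter_upwards [hopen.mem_nhds hpL] with q hq
      rw [hχzero q (fun hint => hq (interior_subset hint)), zero_mul]
  -- (b) : mixed second derivative integration by parts on U
  have hf1fr : ∀ p ∈ frontier U, S.uth p * dZ S.uz p = 0 := fun p hp => by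
    rw [(hB0 p (hfrUE hp)).2.1, zero_mul]
  have hI1 : ∫ p in U, dTh (fun q => S.uth q * dZ S.uz q) p = 0 :=
    int_dTh_zero (huth1.mul (contDiff_dZ' huz2)) hUopen hUb hf1fr
  have hf2fr : ∀ p ∈ frontier U, S.uth p * dTh S.uz p = 0 := fun p hp => by
    rw [(hB0 p (hfrUE hp)).2.1, zero_mul]
  have hI2 : ∫ p in U, dZ (fun q => S.uth q * dTh S.uz q) p = 0 :=
    int_dZ_zero (huth1.mul (contDiff_dTh' huz2)) hUopen hUb hf2fr
  have hDdZuz : Differentiable ℝ (dZ S.uz) := (contDiff_dZ' huz2).differentiable one_ne_zero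
  have hDdThuz : Differentiable ℝ (dTh S.uz) := (contDiff_dTh' huz2).differentiable one_ne_zero
  have hexp1 : ∀ p, dTh (fun q => S.uth q * dZ S.uz q) p
      = dTh S.uth p * dZ S.uz p + S.uth p * dTh (dZ S.uz) p :=
    fun p => dTh_mul (huthD p) (hDdZuz p)
  have hexp2 : ∀ p, dZ (fun q => S.uth q * dTh S.uz q) p
      = dZ S.uth p * dTh S.uz p + S.uth p * dZ (dTh S.uz) p :=
    fun p => dZ_mul (huthD p) (hDdThuz p)
  have hsym : ∀ p, dTh (dZ S.uz) p = dZ (dTh S.uz) p := cross_symm huz2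
  have iMix : IntegrableOn (fun p => S.uth p * dTh (dZ S.uz) p) U :=
    hIntOn _ (huth1.continuous.mul (continuous_dTh (contDiff_dZ' huz2))).continuousOn _ hUclE
  have ig1U : IntegrableOn (fun p => dTh S.uth p * dZ S.uz p) U := hIntOn _ cg1 _ hUclE
  have iR1U : IntegrableOn (fun p => dZ S.uth p * dTh S.uz p) U := hIntOn _ cR1 _ hUclE
  have hb' : (∫ p in U, dTh S.uth p * dZ S.uz p) = ∫ p in U, dZ S.uth p * dTh S.uz p := by
    have e1 : ∫ p in U, (dTh S.uth p * dZ S.uz p + S.uth p * dTh (dZ S.uz) p) = 0 := by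
      rw [← hI1]
      exact setIntegral_congr_fun hUopen.measurableSet (fun p _ => (hexp1 p).symm)
    have e2 : ∫ p in U, (dZ S.uth p * dTh S.uz p + S.uth p * dTh (dZ S.uz) p) = 0 := by
      rw [← hI2]
      refine setIntegral_congr_fun hUopen.measurableSet (fun p _ => ?_)
      rw [hexp2 p, hsym p]
    rw [integral_add ig1U iMix] at e1
    rw [integral_add iR1U iMix] at e2
    linarith
  -- (c) : θ-direction coefficient term
  have hχwC : ContDiff ℝ 1 (fun p => (χ₀ : ℝ × ℝ → ℝ) p * (dTh S.Az p / S.Ath p)) :=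
    hchiMul _ hwC1
  have hfcC : ContDiff ℝ 1
      (fun p => ((χ₀ : ℝ × ℝ → ℝ) p * (dTh S.Az p / S.Ath p)) * (S.uth p * S.uth p)) :=
    hχwC.mul (huth1.mul huth1)
  have hfcfr : ∀ p ∈ frontier U,
      ((χ₀ : ℝ × ℝ → ℝ) p * (dTh S.Az p / S.Ath p)) * (S.uth p * S.uth p) = 0 :=
    fun p hp => by rw [(hB0 p (hfrUE hp)).2.1]; ring
  have hIc : ∫ p in U,
      dTh (fun q => ((χ₀ : ℝ × ℝ → ℝ) q * (dTh S.Az q / S.Ath q)) * (S.uth q * S.uth q)) p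
      = 0 := int_dTh_zero hfcC hUopen hUb hfcfr
  have hexpc : ∀ p ∈ U,
      dTh (fun q => ((χ₀ : ℝ × ℝ → ℝ) q * (dTh S.Az q / S.Ath q)) * (S.uth q * S.uth q)) p
      = dTh (fun q => dTh S.Az q / S.Ath q) p * S.uth p ^ 2
        + 2 * (dTh S.Az p / S.Ath p * (S.uth p * dTh S.uth p)) := by
    intro p hp
    have hpN : p ∈ N := hclEN (hUclE hp)
    have hwD : DifferentiableAt ℝ (fun q => dTh S.Az q / S.Ath q) p :=
      (hwC1.contDiffAt (hNopen.mem_nhds hpN)).differentiableAt one_ne_zero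
    have hEq : (fun q => ((χ₀ : ℝ × ℝ → ℝ) q * (dTh S.Az q / S.Ath q)) * (S.uth q * S.uth q))
        =ᶠ[nhds p] (fun q => (dTh S.Az q / S.Ath q) * (S.uth q * S.uth q)) := by
      filter_upwards [hUopen.mem_nhds hp] with q hq
      rw [hχone q (hUclE hq), one_mul]
    rw [dTh_congr hEq, dTh_mul (g := fun q => S.uth q * S.uth q) hwD ((huthD p).mul (huthD p)), dTh_mul (huthD p) (huthD p)]
    ring
  have iR4U : IntegrableOn
      (fun p => dTh (fun q => dTh S.Az q / S.Ath q) p * S.uth p ^ 2) U := hIntOn _ cR4 _ hUclE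
  have ig2U : IntegrableOn
      (fun p => dTh S.Az p / S.Ath p * (S.uth p * dTh S.uth p)) U := hIntOn _ cg2 _ hUclE
  have hc' : (∫ p in U, dTh (fun q => dTh S.Az q / S.Ath q) p * S.uth p ^ 2)
      + 2 * (∫ p in U, dTh S.Az p / S.Ath p * (S.uth p * dTh S.uth p)) = 0 := by
    have e : ∫ p in U, (dTh (fun q => dTh S.Az q / S.Ath q) p * S.uth p ^ 2
        + 2 * (dTh S.Az p / S.Ath p * (S.uth p * dTh S.uth p))) = 0 := by
      rw [← hIc]
      exact setIntegral_congr_fun hUopen.measurableSet (fun p hp => (hexpc p hp).symm)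
    rw [integral_add iR4U (ig2U.const_mul 2), MeasureTheory.integral_const_mul] at e
    exact e
  -- (d) : z-direction coefficient term
  have hχvC : ContDiff ℝ 1 (fun p => (χ₀ : ℝ × ℝ → ℝ) p * (dZ S.Ath p / S.Az p)) :=
    hchiMul _ hvC1
  have hfdC : ContDiff ℝ 1
      (fun p => ((χ₀ : ℝ × ℝ → ℝ) p * (dZ S.Ath p / S.Az p)) * (S.uz p * S.uz p)) :=
    hχvC.mul (huz1.mul huz1)
  have hfdfr : ∀ p ∈ frontier U,
      ((χ₀ : ℝ × ℝ → ℝ) p * (dZ S.Ath p / S.Az p)) * (S.uz p * S.uz p) = 0 :=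
    fun p hp => by rw [(hB0 p (hfrUE hp)).2.2]; ring
  have hId : ∫ p in U,
      dZ (fun q => ((χ₀ : ℝ × ℝ → ℝ) q * (dZ S.Ath q / S.Az q)) * (S.uz q * S.uz q)) p
      = 0 := int_dZ_zero hfdC hUopen hUb hfdfr
  have hexpd : ∀ p ∈ U,
      dZ (fun q => ((χ₀ : ℝ × ℝ → ℝ) q * (dZ S.Ath q / S.Az q)) * (S.uz q * S.uz q)) p
      = dZ (fun q => dZ S.Ath q / S.Az q) p * S.uz p ^ 2
        + 2 * (dZ S.Ath p / S.Az p * (S.uz p * dZ S.uz p)) := by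
    intro p hp
    have hpN : p ∈ N := hclEN (hUclE hp)
    have hvD : DifferentiableAt ℝ (fun q => dZ S.Ath q / S.Az q) p :=
      (hvC1.contDiffAt (hNopen.mem_nhds hpN)).differentiableAt one_ne_zero
    have hEq : (fun q => ((χ₀ : ℝ × ℝ → ℝ) q * (dZ S.Ath q / S.Az q)) * (S.uz q * S.uz q))
        =ᶠ[nhds p] (fun q => (dZ S.Ath q / S.Az q) * (S.uz q * S.uz q)) := by
      filter_upwards [hUopen.mem_nhds hp] with q hq
      rw [hχone q (hUclE hq), one_mul]
    rw [dZ_congr hEq, dZ_mul (g := fun q => S.uz q * S.uz q) hvD ((huzD p).mul (huzD p)), dZ_mul (huzD p) (huzD p)]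
    ring
  have iR3U : IntegrableOn
      (fun p => dZ (fun q => dZ S.Ath q / S.Az q) p * S.uz p ^ 2) U := hIntOn _ cR3 _ hUclE
  have ig3U : IntegrableOn
      (fun p => dZ S.Ath p / S.Az p * (S.uz p * dZ S.uz p)) U := hIntOn _ cg3 _ hUclE
  have hd' : (∫ p in U, dZ (fun q => dZ S.Ath q / S.Az q) p * S.uz p ^ 2)
      + 2 * (∫ p in U, dZ S.Ath p / S.Az p * (S.uz p * dZ S.uz p)) = 0 := by
    have e : ∫ p in U, (dZ (fun q => dZ S.Ath q / S.Az q) p * S.uz p ^ 2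
        + 2 * (dZ S.Ath p / S.Az p * (S.uz p * dZ S.uz p))) = 0 := by
      rw [← hId]
      exact setIntegral_congr_fun hUopen.measurableSet (fun p hp => (hexpd p hp).symm)
    rw [integral_add iR3U (ig3U.const_mul 2), MeasureTheory.integral_const_mul] at e
    exact e
  -- vanishing of all integrals over the residual boundary part A
  have hAzero_uth : ∀ p ∈ A, S.uth p = 0 := fun p hp => (hB0 p (hAfr hp)).2.1
  have hAzero_uz : ∀ p ∈ A, S.uz p = 0 := fun p hp => (hB0 p (hAfr hp)).2.2
  have hAint0_dZ : ∀ (h g : ℝ × ℝ → ℝ), ContDiff ℝ 1 g → (∀ p ∈ A, g p = 0) →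
      ∫ p in A, h p * dZ g p = 0 := by
    intro h g hg hg0
    have h0 : volume {p | p ∈ A ∧ dZ g p ≠ 0} = 0 := slice_null hg hAmeas hg0
    apply integral_eq_zero_of_ae
    have hae : ∀ᵐ p ∂(volume.restrict A), dZ g p = 0 := by
      rw [ae_restrict_iff' hAmeas, ae_iff]
      convert h0 using 2
      ext p
      simp only [mem_setOf_eq]
      tauto
    filter_upwards [hae] with p hp
    simp [hp]
  have hAg1 : ∫ p in A, dTh S.uth p * dZ S.uz p = 0 := hAint0_dZ _ _ huz1 hAzero_uz
  have hAR1 : ∫ p in A, dZ S.uth p * dTh S.uz p = 0 := by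
    have h := hAint0_dZ (fun p => dTh S.uz p) _ huth1 hAzero_uth
    rw [← h]
    exact setIntegral_congr_fun hAmeas (fun p _ => mul_comm _ _)
  have hAptzero : ∀ (h : ℝ × ℝ → ℝ), (∀ p ∈ A, h p = 0) → ∫ p in A, h p = 0 := by
    intro h h0
    rw [setIntegral_congr_fun hAmeas (g := fun _ => (0:ℝ)) h0]
    simp
  have hAg2 : ∫ p in A, dTh S.Az p / S.Ath p * (S.uth p * dTh S.uth p) = 0 :=
    hAptzero _ (fun p hp => by rw [hAzero_uth p hp, zero_mul, mul_zero])
  have hAg3 : ∫ p in A, dZ S.Ath p / S.Az p * (S.uz p * dZ S.uz p) = 0 :=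
    hAptzero _ (fun p hp => by rw [hAzero_uz p hp, zero_mul, mul_zero])
  have hAg4 : ∫ p in A, dZ S.Ath p * dTh S.Az p / (S.Ath p * S.Az p) * (S.uth p * S.uz p) = 0 :=
    hAptzero _ (fun p hp => by rw [hAzero_uth p hp, zero_mul, mul_zero])
  have hAR3 : ∫ p in A, dZ (fun q => dZ S.Ath q / S.Az q) p * S.uz p ^ 2 = 0 :=
    hAptzero _ (fun p hp => by rw [hAzero_uz p hp]; ring)
  have hAR4 : ∫ p in A, dTh (fun q => dTh S.Az q / S.Ath q) p * S.uth p ^ 2 = 0 :=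
    hAptzero _ (fun p hp => by rw [hAzero_uth p hp]; ring)
  -- reduction of all set integrals to U
  have hresInt : ∀ (g : ℝ × ℝ → ℝ), (∫ p in S.E, g p) = ∫ p in H, g p := by
    intro g
    rw [hrestr]
  have hsplit : ∀ (g : ℝ × ℝ → ℝ), ContinuousOn g (closure S.E) →
      (∫ p in H, g p) = (∫ p in U, g p) + ∫ p in A, g p := by
    intro g hg
    rw [show H = U ∪ A from (Set.union_diff_cancel hUH).symm]
    exact setIntegral_union disjoint_sdiff_self_right hAmeas (hIntOn g hg U hUclE)
      (hIntOn g hg A hAclE)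
  have eR1 : (∫ p in S.E, dZ S.uth p * dTh S.uz p) = ∫ p in U, dZ S.uth p * dTh S.uz p := by
    rw [hresInt, hsplit _ cR1, hAR1, add_zero]
  have eR2 : (∫ p in S.E, dZ S.Ath p * dTh S.Az p / (S.Ath p * S.Az p) * (S.uth p * S.uz p))
      = ∫ p in U, dZ S.Ath p * dTh S.Az p / (S.Ath p * S.Az p) * (S.uth p * S.uz p) := by
    rw [hresInt, hsplit _ cg4, hAg4, add_zero]
  have eR3 : (∫ p in S.E, dZ (fun q => dZ S.Ath q / S.Az q) p * S.uz p ^ 2)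
      = ∫ p in U, dZ (fun q => dZ S.Ath q / S.Az q) p * S.uz p ^ 2 := by
    rw [hresInt, hsplit _ cR3, hAR3, add_zero]
  have eR4 : (∫ p in S.E, dTh (fun q => dTh S.Az q / S.Ath q) p * S.uth p ^ 2)
      = ∫ p in U, dTh (fun q => dTh S.Az q / S.Ath q) p * S.uth p ^ 2 := by
    rw [hresInt, hsplit _ cR4, hAR4, add_zero]
  -- the left-hand side
  have cG : ContinuousOn (fun p => dTh S.uth p * dZ S.uz p
      + dTh S.Az p / S.Ath p * (S.uth p * dTh S.uth p)
      + dZ S.Ath p / S.Az p * (S.uz p * dZ S.uz p)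
      + dZ S.Ath p * dTh S.Az p / (S.Ath p * S.Az p) * (S.uth p * S.uz p)) (closure S.E) :=
    ((cg1.add cg2).add cg3).add cg4
  have hLHSexp : ∀ p ∈ closure S.E,
      S.Ath p * S.Az p * (S.F22 p - S.kth p * S.ut p) * (S.F33 p - S.kz p * S.ut p)
      = dTh S.uth p * dZ S.uz p
        + dTh S.Az p / S.Ath p * (S.uth p * dTh S.uth p)
        + dZ S.Ath p / S.Az p * (S.uz p * dZ S.uz p)
        + dZ S.Ath p * dTh S.Az p / (S.Ath p * S.Az p) * (S.uth p * S.uz p) := by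
    intro p hp
    have ha : S.Ath p ≠ 0 := hAthne p hp
    have hb : S.Az p ≠ 0 := hAzne p hp
    simp only [Setup2D.F22, Setup2D.F33]
    field_simp
    ring
  have hsplit4 : ∀ (s : Set (ℝ × ℝ)), s ⊆ closure S.E → MeasurableSet s →
      (∫ p in s, (dTh S.uth p * dZ S.uz p
        + dTh S.Az p / S.Ath p * (S.uth p * dTh S.uth p)
        + dZ S.Ath p / S.Az p * (S.uz p * dZ S.uz p)
        + dZ S.Ath p * dTh S.Az p / (S.Ath p * S.Az p) * (S.uth p * S.uz p)))
      = (∫ p in s, dTh S.uth p * dZ S.uz p)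
        + (∫ p in s, dTh S.Az p / S.Ath p * (S.uth p * dTh S.uth p))
        + (∫ p in s, dZ S.Ath p / S.Az p * (S.uz p * dZ S.uz p))
        + ∫ p in s, dZ S.Ath p * dTh S.Az p / (S.Ath p * S.Az p) * (S.uth p * S.uz p) := by
    intro s hs _
    have i1 := hIntOn _ cg1 s hs
    have i2 := hIntOn _ cg2 s hs
    have i3 := hIntOn _ cg3 s hs
    have i4 := hIntOn _ cg4 s hs
    have i12 : IntegrableOn (fun p => dTh S.uth p * dZ S.uz p
      + dTh S.Az p / S.Ath p * (S.uth p * dTh S.uth p)) s := i1.add i2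
    have i123 : IntegrableOn (fun p => dTh S.uth p * dZ S.uz p
      + dTh S.Az p / S.Ath p * (S.uth p * dTh S.uth p)
      + dZ S.Ath p / S.Az p * (S.uz p * dZ S.uz p)) s := i12.add i3
    rw [integral_add i123 i4, integral_add i12 i3, integral_add i1 i2]
  have eL : S.ip (fun p => S.F22 p - S.kth p * S.ut p) (fun p => S.F33 p - S.kz p * S.ut p)
      = (∫ p in U, dTh S.uth p * dZ S.uz p)
        + (∫ p in U, dTh S.Az p / S.Ath p * (S.uth p * dTh S.uth p))
        + (∫ p in U, dZ S.Ath p / S.Az p * (S.uz p * dZ S.uz p))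
        + ∫ p in U, dZ S.Ath p * dTh S.Az p / (S.Ath p * S.Az p) * (S.uth p * S.uz p) := by
    have h1 : S.ip (fun p => S.F22 p - S.kth p * S.ut p) (fun p => S.F33 p - S.kz p * S.ut p)
        = ∫ p in H, (dTh S.uth p * dZ S.uz p
          + dTh S.Az p / S.Ath p * (S.uth p * dTh S.uth p)
          + dZ S.Ath p / S.Az p * (S.uz p * dZ S.uz p)
          + dZ S.Ath p * dTh S.Az p / (S.Ath p * S.Az p) * (S.uth p * S.uz p)) := by
      show (∫ p in S.E, S.Ath p * S.Az p * (S.F22 p - S.kth p * S.ut p)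
        * (S.F33 p - S.kz p * S.ut p)) = _
      rw [hresInt]
      exact setIntegral_congr_fun hHmeas (fun p hp => hLHSexp p (hHclE hp))
    rw [h1, hsplit _ cG, hsplit4 U hUclE hUopen.measurableSet,
      hsplit4 A hAclE hAmeas, hAg1, hAg2, hAg3, hAg4]
    ring
  rw [eL, eR1, eR2, eR3, eR4]
  linarith [hb', hc', hd']
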